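/- In an EAMP CG G' over W ∪ ε, a node B ∈ W that is neither an endpoint nor a triplex node of a route ρ, and that participates in no undirected edges, can only appear in ρ in one of the configurations A → B → C, A ← B ← C, or A ← B → C; replacing these respectively by A → C, A ← C, and A ← ε^B → C yields a route in the marginalized graph [G']_{\{B\}}, and if ρ is Z-open with Z ⊆ W \ {B} then the resulting route is Z-open in [G']_{\{B\}}. -/

import Mathlib

/- Mixed graphs with directed and undirected edges. -/
structure MixedGraph (γ : Type*) where
  dir : γ → γ → Prop
  undir : γ → γ → Prop
  undir_symm : ∀ a b, undir a b → undir b a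

namespace MixedGraph

variable {β : Type*} (G : MixedGraph β)

/-- Two nodes are adjacent if joined by some edge. -/
def adj (a b : β) : Prop := G.dir a b ∨ G.dir b a ∨ G.undir a b

/-- The graph is simple: no loops and at most one edge between any pair. -/
def Simple : Prop :=
  (∀ a, ¬ G.dir a a) ∧ (∀ a, ¬ G.undir a a) ∧
  (∀ a b, G.dir a b → ¬ G.dir b a) ∧ (∀ a b, G.dir a b → ¬ G.undir a b)

/-- A semidirected cycle: a cycle whose first edge is directed and whose other
edges are directed or undirected (all pointing forwards). -/
def HasSemidirectedCycle : Prop :=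
  ∃ (n : ℕ) (f : Fin (n + 2) → β),
    f 0 = f (Fin.last (n + 1)) ∧ G.dir (f 0) (f 1) ∧
    ∀ i : Fin (n + 1), G.dir (f i.castSucc) (f i.succ) ∨ G.undir (f i.castSucc) (f i.succ)

/-- A chain graph: a simple graph with no semidirected cycle. -/
def IsChainGraph : Prop := G.Simple ∧ ¬ G.HasSemidirectedCycle

/-- A DAG: a chain graph with no undirected edges. -/
def IsDAG : Prop := G.IsChainGraph ∧ ∀ a b, ¬ G.undir a b

/-- Parents of a set of nodes. -/
def pa (X : Set β) : Set β := {v | v ∉ X ∧ ∃ x ∈ X, G.dir v x}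

/-- Strict ascendants of a set of nodes (strictly descending route to the set). -/
def san (W : Set β) : Set β := {v | v ∉ W ∧ ∃ w ∈ W, Relation.TransGen G.dir v w}

/-- B is a triplex node between A and C: A → B ← C, A → B − C, or A − B ← C. -/
def triplex (A B C : β) : Prop :=
  (G.dir A B ∧ G.dir C B) ∨ (G.dir A B ∧ G.undir B C) ∨ (G.undir A B ∧ G.dir C B)

/-- B is a non-triplex node between A and C. -/
def nontriplex (A B C : β) : Prop :=
  G.adj A B ∧ G.adj B C ∧ ¬ G.triplex A B C

/-- A route: a nonempty sequence of consecutively adjacent nodes. -/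
def IsRoute (l : List β) : Prop := l ≠ [] ∧ l.Chain' G.adj

/-- A path that is open given the determined set `D` (AMP path-based semantics). -/
def AMPOpenPath (D : Set β) (l : List β) : Prop :=
  G.IsRoute l ∧ l.Nodup ∧
  (∀ A B C, [A, B, C] <:+: l → G.triplex A B C → B ∈ D ∪ G.san D) ∧
  (∀ A B C, [A, B, C] <:+: l → G.nontriplex A B C → B ∈ D →
    (G.undir A B ∧ G.undir B C ∧ ∃ p ∈ G.pa {B}, p ∉ D))

/-- A route that is open given the determined set `D` (AMP route-based semantics). -/
def AMPOpenRoute (D : Set β) (l : List β) : Prop :=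
  G.IsRoute l ∧
  (∀ A B C, [A, B, C] <:+: l → G.triplex A B C → B ∈ D) ∧
  (∀ A B C, [A, B, C] <:+: l → G.nontriplex A B C → B ∉ D)

/-- AMP separation (path-based) of X and Y given determined set D. -/
def AMPSep (D X Y : Set β) : Prop :=
  ∀ (l : List β) (x y : β), x ∈ X → y ∈ Y → l.head? = some x → l.getLast? = some y →
    ¬ G.AMPOpenPath D l

/-- AMP separation (route-based) of X and Y given determined set D. -/
def AMPSepRoute (D X Y : Set β) : Prop :=
  ∀ (l : List β) (x y : β), x ∈ X → y ∈ Y → l.head? = some x → l.getLast? = some y →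
    ¬ G.AMPOpenRoute D l

/-- `s` is a collider section of the route `l`: a maximal undirected subroute of `l`
entered by arrowheads at both ends. -/
def IsColliderSection (l s : List β) : Prop :=
  s ≠ [] ∧ List.Chain' G.undir s ∧
  ∃ pre post A C, l = pre ++ s ++ post ∧
    pre.getLast? = some A ∧ post.head? = some C ∧
    (∀ b, s.head? = some b → G.dir A b) ∧ (∀ b, s.getLast? = some b → G.dir C b) ∧
    (∀ a b, pre.getLast? = some a → s.head? = some b → ¬ G.undir a b) ∧
    (∀ a b, s.getLast? = some a → post.head? = some b → ¬ G.undir a b)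

/-- `s` is a non-collider section of the route `l`: a maximal undirected subroute of `l`
not entered by arrowheads at both ends. -/
def IsNonColliderSection (l s : List β) : Prop :=
  s ≠ [] ∧ List.Chain' G.undir s ∧
  ∃ pre post, l = pre ++ s ++ post ∧
    (∀ a b, pre.getLast? = some a → s.head? = some b → ¬ G.undir a b) ∧
    (∀ a b, s.getLast? = some a → post.head? = some b → ¬ G.undir a b) ∧
    ¬ ((∃ A, pre.getLast? = some A ∧ ∀ b, s.head? = some b → G.dir A b) ∧
       (∃ C, post.head? = some C ∧ ∀ b, s.getLast? = some b → G.dir C b))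

/-- A route that is open given the determined set `D` (LWF semantics). -/
def LWFOpenRoute (D : Set β) (l : List β) : Prop :=
  G.IsRoute l ∧
  (∀ s, G.IsColliderSection l s → ∃ x ∈ s, x ∈ D) ∧
  (∀ s, G.IsNonColliderSection l s → ∀ x ∈ s, x ∉ D)

/-- LWF separation of X and Y given determined set D. -/
def LWFSep (D X Y : Set β) : Prop :=
  ∀ (l : List β) (x y : β), x ∈ X → y ∈ Y → l.head? = some x → l.getLast? = some y →
    ¬ G.LWFOpenRoute D l

/-- Closure of Z under a set `det` of deterministic relationships: `(S, a) ∈ det`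
means that `a` is a function of `S`. -/
inductive Determined (det : Set (Set β × β)) (Z : Set β) : β → Prop
  | base : ∀ a, a ∈ Z → Determined det Z a
  | step : ∀ (S : Set β) (a : β), (S, a) ∈ det → (∀ b ∈ S, Determined det Z b) →
      Determined det Z a

/-- The set D(Z) of nodes determined by Z. -/
def DSet (det : Set (Set β × β)) (Z : Set β) : Set β := {a | Determined det Z a}

end MixedGraph

section EAMP

variable {α : Type*}

/-- Directed edges of the EAMP CG: `inl` nodes are the original nodes,
`inr` nodes are the error nodes. -/
def eampDir (G : MixedGraph α) : (α ⊕ α) → (α ⊕ α) → Prop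
  | Sum.inl x, Sum.inl y => G.dir x y
  | Sum.inr x, Sum.inl y => x = y
  | _, _ => False

/-- Undirected edges of the EAMP CG: `ε^A − ε^B` for each `A − B` of G. -/
def eampUndir (G : MixedGraph α) : (α ⊕ α) → (α ⊕ α) → Prop
  | Sum.inr x, Sum.inr y => G.undir x y
  | _, _ => False

/-- The EAMP CG G' of an AMP CG G: add `ε^A → A` for each node A and replace
each undirected edge `A − B` by `ε^A − ε^B`. -/
def eamp (G : MixedGraph α) : MixedGraph (α ⊕ α) where
  dir := eampDir G
  undir := eampUndir G
  undir_symm := by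
    rintro (x | x) (y | y) h <;>
      simp only [eampUndir] at h ⊢ <;>
      first
        | exact h.elim
        | exact G.undir_symm _ _ h

/-- The parents of A in G, embedded as nodes of the EAMP CG. -/
def eampPa (G : MixedGraph α) (A : α) : Set (α ⊕ α) := {x | ∃ B, G.dir B A ∧ x = Sum.inl B}

/-- The deterministic relationships of the EAMP CG: each A is a function of
`pa_G(A) ∪ {ε^A}`, and each `ε^A` is a function of `pa_G(A) ∪ {A}`. -/
def eampDet (G : MixedGraph α) : Set (Set (α ⊕ α) × (α ⊕ α)) :=
  {p | (∃ A, p = (eampPa G A ∪ {Sum.inr A}, Sum.inl A)) ∨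
       (∃ A, p = (eampPa G A ∪ {Sum.inl A}, Sum.inr A))}

/-- Marginalize the node B out of G: add `A → C` for every pair `A → B`, `B → C`,
then delete B together with all edges it participates in. -/
def marg {β : Type*} (G : MixedGraph β) (B : β) : MixedGraph β where
  dir a c := a ≠ B ∧ c ≠ B ∧ (G.dir a c ∨ (G.dir a B ∧ G.dir B c))
  undir a c := a ≠ B ∧ c ≠ B ∧ G.undir a c
  undir_symm := by
    rintro a c ⟨h1, h2, h3⟩
    exact ⟨h2, h1, G.undir_symm _ _ h3⟩

/-- Marginalize a list of nodes out of G, one at a time. -/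
def margList {β : Type*} (G : MixedGraph β) (L : List β) : MixedGraph β := L.foldl marg G

/-- Directed edges of the DAG G'': those of G' among `V ∪ ε`, plus
`ε^A → S_{ε^Aε^B} ← ε^B` for each undirected edge `ε^A − ε^B` of G'. -/
def dagDir (G : MixedGraph α) : ((α ⊕ α) ⊕ Sym2 α) → ((α ⊕ α) ⊕ Sym2 α) → Prop
  | Sum.inl x, Sum.inl y => (eamp G).dir x y
  | Sum.inl (Sum.inr x), Sum.inr s => ∃ y, G.undir x y ∧ s = s(x, y)
  | _, _ => False

/-- The DAG G'' obtained from G' by replacing each `ε^A − ε^B` with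
`ε^A → S_{ε^Aε^B} ← ε^B`, where the selection nodes are fresh. -/
def dagOf (G : MixedGraph α) : MixedGraph ((α ⊕ α) ⊕ Sym2 α) where
  dir := dagDir G
  undir _ _ := False
  undir_symm := by intro a b h; exact h.elim

/-- The set S of selection nodes of G''. -/
def selNodes (G : MixedGraph α) : Set ((α ⊕ α) ⊕ Sym2 α) :=
  {v | ∃ x y, G.undir x y ∧ v = Sum.inr s(x, y)}

/-- The deterministic relationships of G'' (the same as those of G'). -/
def dagDet (G : MixedGraph α) : Set (Set ((α ⊕ α) ⊕ Sym2 α) × ((α ⊕ α) ⊕ Sym2 α)) :=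
  {p | ∃ q ∈ eampDet G, p = (Sum.inl '' q.1, Sum.inl q.2)}

/-- Structural characterization of EAMP CGs over `W ∪ ε`: a chain graph whose
undirected edges join only error nodes and whose error nodes have no incoming
directed edges. -/
def IsEAMPStruct (G : MixedGraph (α ⊕ α)) : Prop :=
  G.IsChainGraph ∧
  (∀ a b, G.undir a b → (∃ x, a = Sum.inr x) ∧ ∃ y, b = Sum.inr y) ∧
  (∀ a x, ¬ G.dir a (Sum.inr x))

/-- K is a connectivity component: a maximal set connected by undirected paths. -/
def IsConnComp {β : Type*} (G : MixedGraph β) (K : Set β) : Prop :=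
  ∃ a, K = {b | Relation.ReflTransGen G.undir a b}

end EAMP

/-!
Each occurrence of `B` on the route is interior and, having no undirected edges and not being a
triplex node, sits in `A → B → C`, `A ← B ← C` or `A ← B → C`. Marginalizing `B` creates the
edges `A → C`, `C → A`, `ε^B → A` and `ε^B → C` respectively, and in each case the new edge carries
at each of its endpoints the same mark as the edge to `B` it replaces (the other orientations
would close a directed cycle, and undirected edges only join error nodes, which have no parents).
Since triplexity at a node depends only on the marks there, every old node keeps its status, and
the inserted `ε^B` is a non-triplex node outside `D`. Passing from `D` to `D \ {B}` changes
nothing on either route, but makes "`B` is not a triplex node" part of openness.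
-/

namespace MixedGraph

variable {β : Type*}

lemma undir_comm (H : MixedGraph β) {a b : β} : H.undir a b ↔ H.undir b a :=
  ⟨H.undir_symm a b, H.undir_symm b a⟩

lemma adj_symm (H : MixedGraph β) {a b : β} : H.adj a b → H.adj b a := by
  rintro (h | h | h)
  exacts [Or.inr (Or.inl h), Or.inl h, Or.inr (Or.inr (H.undir_symm a b h))]

/-- The edge `x – y` of `H` and the edge `x' – y` of `K` carry the same mark at `y`. -/
def SameEndAt (H K : MixedGraph β) (y x x' : β) : Prop :=
  (H.dir x y ↔ K.dir x' y) ∧ (H.undir x y ↔ K.undir x' y)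

lemma triplex_congr {H K : MixedGraph β} {x x' y z z' : β} (hx : H.SameEndAt K y x x')
    (hz : H.SameEndAt K y z z') : H.triplex x y z ↔ K.triplex x' y z' := by
  simp only [triplex, hx.1, hx.2, hz.1, H.undir_comm (a := y), K.undir_comm (a := y), hz.2]

def OpenAt (H : MixedGraph β) (D : Set β) (x y z : β) : Prop :=
  (H.triplex x y z → y ∈ D) ∧ (H.nontriplex x y z → y ∉ D)

lemma OpenAt.of_sameEndAt {H K : MixedGraph β} {D : Set β} {x x' y z z' : β}
    (hK : K.OpenAt D x' y z') (hx : H.SameEndAt K y x x') (hz : H.SameEndAt K y z z')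
    (hx' : K.adj x' y) (hz' : K.adj y z') : H.OpenAt D x y z := by
  have htrip := triplex_congr hx hz
  exact ⟨fun ht => hK.1 (htrip.1 ht),
    fun ⟨_, _, hnt⟩ => hK.2 ⟨hx', hz', fun ht => hnt (htrip.2 ht)⟩⟩

lemma infix_triple_cons_cons {A B C x y : β} {l : List β} :
    [A, B, C] <:+: x :: y :: l ↔ (A = x ∧ B = y ∧ l.head? = some C) ∨ [A, B, C] <:+: y :: l := by
  rw [List.infix_cons_iff, List.cons_prefix_cons, List.cons_prefix_cons,
    List.singleton_prefix_iff_head?_eq_some]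

lemma isRoute_cons_cons {H : MixedGraph β} {x y : β} {l : List β} :
    H.IsRoute (x :: y :: l) ↔ H.adj x y ∧ H.IsRoute (y :: l) :=
  ⟨fun ⟨_, hc⟩ => ⟨(List.isChain_cons_cons.1 hc).1, List.cons_ne_nil y l,
      (List.isChain_cons_cons.1 hc).2⟩,
    fun ⟨hxy, _, hc⟩ => ⟨List.cons_ne_nil x _, List.isChain_cons_cons.2 ⟨hxy, hc⟩⟩⟩

lemma ampOpenRoute_singleton {D : Set β} (H : MixedGraph β) (x : β) : H.AMPOpenRoute D [x] := by
  refine ⟨⟨List.cons_ne_nil x [], List.IsChain.singleton x⟩, ?_, ?_⟩ <;>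
    intro A B C hi <;> simpa using hi.length_le

lemma ampOpenRoute_cons_cons {H : MixedGraph β} {D : Set β} {x y : β} {l : List β} :
    H.AMPOpenRoute D (x :: y :: l) ↔
      H.adj x y ∧ (∀ z ∈ l.head?, H.OpenAt D x y z) ∧ H.AMPOpenRoute D (y :: l) := by
  simp only [AMPOpenRoute, isRoute_cons_cons, infix_triple_cons_cons, OpenAt, Option.mem_def]
  constructor
  · rintro ⟨⟨hxy, hr⟩, ht, hn⟩
    exact ⟨hxy, fun z hz => ⟨ht x y z (Or.inl ⟨rfl, rfl, hz⟩), hn x y z (Or.inl ⟨rfl, rfl, hz⟩)⟩,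
      hr, fun A B C hi => ht A B C (Or.inr hi), fun A B C hi => hn A B C (Or.inr hi)⟩
  · rintro ⟨hxy, hz, hr, ht, hn⟩
    refine ⟨⟨hxy, hr⟩, ?_, ?_⟩ <;> rintro A B C (⟨rfl, rfl, hC⟩ | hi)
    exacts [(hz C hC).1, ht A B C hi, (hz C hC).2, hn A B C hi]

lemma AMPOpenRoute.cons_of_sameEndAt {H K : MixedGraph β} {D : Set β} {x y w : β}
    {l l' : List β} (hK : K.AMPOpenRoute D (w :: y :: l)) (hH : H.AMPOpenRoute D (y :: l'))
    (hxy : H.adj x y) (hx : H.SameEndAt K y x w)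
    (hl : ∀ t ∈ l'.head?, ∃ z ∈ l.head?, H.SameEndAt K y t z) :
    H.AMPOpenRoute D (x :: y :: l') := by
  refine ampOpenRoute_cons_cons.2 ⟨hxy, fun t ht => ?_, hH⟩
  obtain ⟨z, hz, hs⟩ := hl t ht
  obtain ⟨hwy, hopen, hyl⟩ := ampOpenRoute_cons_cons.1 hK
  obtain ⟨l₀, rfl⟩ := List.head?_eq_some_iff.1 hz
  exact (hopen z hz).of_sameEndAt hx hs hwy (ampOpenRoute_cons_cons.1 hyl).1

lemma AMPOpenRoute.diff_singleton {H : MixedGraph β} {D : Set β} {v : β} {l : List β}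
    (hl : H.AMPOpenRoute D l) (hv : ∀ A C, [A, v, C] <:+: l → ¬ H.triplex A v C) :
    H.AMPOpenRoute (D \ {v}) l :=
  ⟨hl.1, fun A B C hi ht => ⟨hl.2.1 A B C hi ht, fun hB => hv A C (hB ▸ hi) (hB ▸ ht)⟩,
    fun A B C hi hn hB => hl.2.2 A B C hi hn hB.1⟩

lemma AMPOpenRoute.of_diff_singleton {H : MixedGraph β} {D : Set β} {v : β} {l : List β}
    (hv : ∀ u, ¬ H.adj u v) (hl : H.AMPOpenRoute (D \ {v}) l) : H.AMPOpenRoute D l :=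
  ⟨hl.1, fun A B C hi ht => (hl.2.1 A B C hi ht).1,
    fun A B C hi hn hB => hl.2.2 A B C hi hn ⟨hB, fun hBv => hv A (hBv ▸ hn.1)⟩⟩

lemma marg_adj_of_adj {G : MixedGraph β} {v x y : β} (hxy : G.adj x y) (hx : x ≠ v)
    (hy : y ≠ v) : (marg G v).adj x y := by
  rcases hxy with h | h | h
  exacts [Or.inl ⟨hx, hy, Or.inl h⟩, Or.inr (Or.inl ⟨hy, hx, Or.inl h⟩),
    Or.inr (Or.inr ⟨hx, hy, h⟩)]

lemma marg_not_adj (G : MixedGraph β) (v x : β) : ¬ (marg G v).adj x v := by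
  rintro (h | h | h)
  exacts [h.2.1 rfl, h.1 rfl, h.2.1 rfl]

end MixedGraph

namespace IsEAMPStruct

open MixedGraph

variable {α : Type*} {G : MixedGraph (α ⊕ α)} (h : IsEAMPStruct G)
include h

lemma not_dir_self (x : α ⊕ α) : ¬ G.dir x x := h.1.1.1 x

lemma ne_of_adj {x y : α ⊕ α} (hxy : G.adj x y) : x ≠ y := by
  rintro rfl
  rcases hxy with hd | hd | hu
  exacts [h.not_dir_self x hd, h.not_dir_self x hd, h.1.1.2.1 x hu]

lemma not_dir_of_dir {x y : α ⊕ α} (hxy : G.dir x y) : ¬ G.dir y x := h.1.1.2.2.1 x y hxy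

lemma not_dir_of_dir_of_dir {x y z : α ⊕ α} (hxy : G.dir x y) (hyz : G.dir y z) : ¬ G.dir z x := by
  intro hzx
  refine h.1.2 ⟨2, ![x, y, z, x], rfl, hxy, fun i => Or.inl ?_⟩
  fin_cases i
  exacts [hxy, hyz, hzx]

lemma not_undir_of_dir {x y : α ⊕ α} (hxy : G.dir x y) (w : α ⊕ α) : ¬ G.undir w y := by
  intro hwy
  obtain ⟨-, t, rfl⟩ := h.2.1 w y hwy
  exact h.2.2 x t hxy

lemma not_undir_inl (B : α) (w : α ⊕ α) : ¬ G.undir w (Sum.inl B) := by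
  intro hw
  obtain ⟨-, t, ht⟩ := h.2.1 _ _ hw
  cases ht

lemma dir_configs_of_not_triplex {A C : α ⊕ α} {B : α} (hA : G.adj A (Sum.inl B))
    (hC : G.adj (Sum.inl B) C) (hnt : ¬ G.triplex A (Sum.inl B) C) :
    (G.dir A (Sum.inl B) ∧ G.dir (Sum.inl B) C) ∨
      (G.dir (Sum.inl B) A ∧ G.dir C (Sum.inl B)) ∨
      (G.dir (Sum.inl B) A ∧ G.dir (Sum.inl B) C) := by
  have hb := h.not_undir_inl B
  rcases hA with hA | hA | hA
  · rcases hC with hC | hC | hC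
    exacts [Or.inl ⟨hA, hC⟩, (hnt (Or.inl ⟨hA, hC⟩)).elim, (hb C (G.undir_symm _ _ hC)).elim]
  · rcases hC with hC | hC | hC
    exacts [Or.inr (Or.inr ⟨hA, hC⟩), Or.inr (Or.inl ⟨hA, hC⟩), (hb C (G.undir_symm _ _ hC)).elim]
  · exact (hb A hA).elim

lemma marg_sameEndAt_of_adj {v x y : α ⊕ α} (hxy : G.adj x y) (hx : x ≠ v) (hy : y ≠ v) :
    (marg G v).SameEndAt G y x x := by
  refine ⟨⟨?_, fun hd => ⟨hx, hy, Or.inl hd⟩⟩, ⟨fun hu => hu.2.2, fun hu => ⟨hx, hy, hu⟩⟩⟩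
  rintro ⟨-, -, hd | ⟨hxv, hvy⟩⟩
  · exact hd
  rcases hxy with hd | hd | hu
  exacts [hd, (h.not_dir_of_dir_of_dir hxv hvy hd).elim, (h.not_undir_of_dir hvy x hu).elim]

lemma marg_dir_of_dir_of_dir {v x y : α ⊕ α} (hxv : G.dir x v) (hvy : G.dir v y) :
    (marg G v).dir x y ∧ (marg G v).SameEndAt G y x v ∧ (marg G v).SameEndAt G x y v := by
  have hx : x ≠ v := by rintro rfl; exact h.not_dir_self x hxv
  have hy : y ≠ v := by rintro rfl; exact h.not_dir_self y hvy
  refine ⟨⟨hx, hy, Or.inr ⟨hxv, hvy⟩⟩, ⟨iff_of_true ⟨hx, hy, Or.inr ⟨hxv, hvy⟩⟩ hvy, ?_⟩, ?_, ?_⟩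
  · exact iff_of_false (fun hu => h.not_undir_of_dir hvy x hu.2.2) (h.not_undir_of_dir hvy v)
  · refine iff_of_false ?_ (h.not_dir_of_dir hxv)
    rintro ⟨-, -, hd | ⟨-, hvx⟩⟩
    exacts [h.not_dir_of_dir_of_dir hxv hvy hd, h.not_dir_of_dir hxv hvx]
  · exact iff_of_false (fun hu => h.not_undir_of_dir hvy x (G.undir_symm _ _ hu.2.2))
      (fun hu => h.not_undir_of_dir hxv x (G.undir_symm _ _ hu))

lemma marg_not_triplex_inr (v x z : α ⊕ α) (t : α) : ¬ (marg G v).triplex x (Sum.inr t) z := by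
  have hd : ∀ u, ¬ (marg G v).dir u (Sum.inr t) := by
    rintro u ⟨-, -, hd | ⟨-, hd⟩⟩ <;> exact h.2.2 _ t hd
  rintro (⟨hx, -⟩ | ⟨hx, -⟩ | ⟨-, hz⟩)
  exacts [hd x hx, hd x hx, hd z hz]

lemma marg_bypass_of_not_triplex {B : α} (hedge : G.dir (Sum.inr B) (Sum.inl B))
    {x C : α ⊕ α} (hx : G.adj x (Sum.inl B)) (hC : G.adj (Sum.inl B) C)
    (hnt : ¬ G.triplex x (Sum.inl B) C) :
    ((marg G (Sum.inl B)).adj x C ∧ (marg G (Sum.inl B)).SameEndAt G C x (Sum.inl B) ∧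
        (marg G (Sum.inl B)).SameEndAt G x C (Sum.inl B)) ∨
      ((marg G (Sum.inl B)).dir (Sum.inr B) x ∧
        (marg G (Sum.inl B)).SameEndAt G x (Sum.inr B) (Sum.inl B) ∧
        (marg G (Sum.inl B)).dir (Sum.inr B) C ∧
        (marg G (Sum.inl B)).SameEndAt G C (Sum.inr B) (Sum.inl B)) := by
  rcases h.dir_configs_of_not_triplex hx hC hnt with ⟨hxb, hbC⟩ | ⟨hbx, hCb⟩ | ⟨hbx, hbC⟩
  · obtain ⟨hd, hCx, hxC⟩ := h.marg_dir_of_dir_of_dir hxb hbC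
    exact Or.inl ⟨Or.inl hd, hCx, hxC⟩
  · obtain ⟨hd, hxC, hCx⟩ := h.marg_dir_of_dir_of_dir hCb hbx
    exact Or.inl ⟨Or.inr (Or.inl hd), hCx, hxC⟩
  · obtain ⟨hεx, hxε, -⟩ := h.marg_dir_of_dir_of_dir hedge hbx
    obtain ⟨hεC, hCε, -⟩ := h.marg_dir_of_dir_of_dir hedge hbC
    exact Or.inr ⟨hεx, hxε, hεC, hCε⟩

/-- The last conjunct says that the first edge of the new route has, at `x`, the same mark as
the first edge of the old one; this is what lets the recursion put a node in front of `x`. -/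
theorem exists_margRoute {B : α} (hedge : G.dir (Sum.inr B) (Sum.inl B)) {D : Set (α ⊕ α)}
    (hBD : Sum.inl B ∉ D) (hεD : Sum.inr B ∉ D) :
    ∀ (x : α ⊕ α) (l : List (α ⊕ α)), x ≠ Sum.inl B → (x :: l).getLast? ≠ some (Sum.inl B) →
      G.AMPOpenRoute D (x :: l) →
      ∃ l', (x :: l').getLast? = (x :: l).getLast? ∧
        (marg G (Sum.inl B)).AMPOpenRoute D (x :: l') ∧
        ∀ t ∈ l'.head?, ∃ y ∈ l.head?, (marg G (Sum.inl B)).SameEndAt G x t y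
  | x, [], _, _, _ => ⟨[], rfl, ampOpenRoute_singleton _ x, by simp⟩
  | x, y :: l, hx, hlast, hopen => by
    obtain ⟨hxy, hxyo, hyl⟩ := ampOpenRoute_cons_cons.1 hopen
    by_cases hy : y = Sum.inl B
    · subst hy
      obtain ⟨C, l, rfl⟩ : ∃ C l₀, l = C :: l₀ := by
        cases l with
        | nil => simp at hlast
        | cons C l₀ => exact ⟨C, l₀, rfl⟩
      obtain ⟨hbC, -, hCl⟩ := ampOpenRoute_cons_cons.1 hyl
      obtain ⟨l', hlast', hopen', hend⟩ :=
        exists_margRoute hedge hBD hεD C l (h.ne_of_adj hbC).symm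
        (by simpa using hlast) hCl
      rcases h.marg_bypass_of_not_triplex hedge hxy hbC
          (fun ht => hBD ((hxyo C rfl).1 ht)) with hshort | ⟨hεx, hxε, hεC, hCε⟩
      · refine ⟨C :: l', by simp only [List.getLast?_cons_cons, hlast'],
          hyl.cons_of_sameEndAt hopen' hshort.1 hshort.2.1 hend, ?_⟩
        rintro t ⟨⟩
        exact ⟨_, rfl, hshort.2.2⟩
      · refine ⟨Sum.inr B :: C :: l', by simp only [List.getLast?_cons_cons, hlast'],
          ampOpenRoute_cons_cons.2 ⟨Or.inr (Or.inl hεx), fun z _ => ⟨fun ht => ?_, fun _ => hεD⟩,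
            hyl.cons_of_sameEndAt hopen' (Or.inl hεC) hCε hend⟩, ?_⟩
        · exact (h.marg_not_triplex_inr _ _ _ _ ht).elim
        · rintro t ⟨⟩
          exact ⟨_, rfl, hxε⟩
    · obtain ⟨l', hlast', hopen', hend⟩ := exists_margRoute hedge hBD hεD y l hy
        (by simpa using hlast) hyl
      refine ⟨y :: l', by simp only [List.getLast?_cons_cons, hlast'],
        hopen.cons_of_sameEndAt hopen' (marg_adj_of_adj hxy hx hy)
          (h.marg_sameEndAt_of_adj hxy hx hy) hend, ?_⟩
      rintro t ⟨⟩
      exact ⟨_, rfl, h.marg_sameEndAt_of_adj (G.adj_symm hxy) hy hx⟩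

end IsEAMPStruct

/-- in an EAMP CG G', a node `B ∈ W` that is neither an endpoint
nor a triplex node of a D-open route can only occur in the configurations
`A → B → C`, `A ← B ← C`, or `A ← B → C`, and the route can be transformed into
a D-open route of the marginalized graph `[G']_{B}` (using `ε^B ∉ D(Z)` since
`B ∉ Z`). -/
theorem stmt16 {α : Type*} (G' : MixedGraph (α ⊕ α)) (h : IsEAMPStruct G') (B : α)
    (hedge : G'.dir (Sum.inr B) (Sum.inl B))
    (D : Set (α ⊕ α)) (hεB : Sum.inr B ∉ D)
    (a b : α ⊕ α) (haB : a ≠ Sum.inl B) (hbB : b ≠ Sum.inl B)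
    (l : List (α ⊕ α)) (hl : G'.AMPOpenRoute D l)
    (ha : l.head? = some a) (hb : l.getLast? = some b)
    (htrip : ∀ A C, [A, Sum.inl B, C] <:+: l → ¬ G'.triplex A (Sum.inl B) C) :
    (∀ A C, [A, Sum.inl B, C] <:+: l →
      (G'.dir A (Sum.inl B) ∧ G'.dir (Sum.inl B) C) ∨
      (G'.dir (Sum.inl B) A ∧ G'.dir C (Sum.inl B)) ∨
      (G'.dir (Sum.inl B) A ∧ G'.dir (Sum.inl B) C)) ∧
    ∃ l', l'.head? = some a ∧ l'.getLast? = some b ∧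
      (marg G' (Sum.inl B)).AMPOpenRoute D l' := by
  refine ⟨fun A C hi => ?_, ?_⟩
  · have hc := List.isChain_cons_cons.1 (hl.1.2.infix hi)
    exact h.dir_configs_of_not_triplex hc.1 (List.isChain_cons_cons.1 hc.2).1 (htrip A C hi)
  · obtain ⟨l₀, rfl⟩ := List.head?_eq_some_iff.1 ha
    obtain ⟨l', hlast, hopen, -⟩ := h.exists_margRoute hedge (D := D \ {Sum.inl B})
      (fun hB => hB.2 rfl) (fun hε => hεB hε.1) a l₀ haB (by rw [hb]; simpa using hbB)
      (hl.diff_singleton htrip)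
    exact ⟨a :: l', rfl, hlast.trans hb, hopen.of_diff_singleton (G'.marg_not_adj _)⟩
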